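/- Every word in a flat language of the form w₁·w₂^*·w₃·⋯ has, for each fixed pattern, the property that any two words u, v readable as loops at the same position are powers of a common word. Concretely: in the language s·α^*·p (s a suffix and p a prefix of a word α), any two words u, v with s·α^{k}·u·α^{l}·p and s·α^{k}·v·α^{l}·p both in the language and u, v arising as repetitions of α, are powers of α; hence s·α^*·p contains no butterfly loop p'·{u,v}^*·s' with u, v not powers of a common word. -/

import Mathlib

/-!
Two words of `s ⬝ α^* ⬝ p` with the same length are equal. Since `p' ⬝ u ⬝ v ⬝ s'` and
`p' ⬝ v ⬝ u ⬝ s'` have the same length, a butterfly inside `s ⬝ α^* ⬝ p` forces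
`u ⬝ v = v ⬝ u`, and commuting words are powers of a common word.
-/

open Computability

/-- `wpow w n` is the `n`-fold concatenation (iteration) of the word `w`. -/
def wpow {A : Type*} (w : List A) : ℕ → List A
  | 0 => []
  | n + 1 => w ++ wpow w n

/-- A word is primitive if it cannot be written as `v ^ k` for any `k ≥ 2`. -/
def Primitive {A : Type*} (w : List A) : Prop :=
  ∀ (v : List A) (k : ℕ), 2 ≤ k → w ≠ wpow v k

section

variable {A : Type*}

lemma wpow_add (w : List A) (m n : ℕ) : wpow w (m + n) = wpow w m ++ wpow w n := by
  induction m with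
  | zero => simp [wpow]
  | succ m ih => simp [wpow, Nat.succ_add, ih]

lemma length_wpow (w : List A) (n : ℕ) : (wpow w n).length = n * w.length := by
  induction n with
  | zero => simp [wpow]
  | succ n ih => simp [wpow, ih, Nat.succ_mul, Nat.add_comm]

lemma wpow_nil (n : ℕ) : wpow ([] : List A) n = [] := by
  induction n with
  | zero => rfl
  | succ n ih => simp [wpow, ih]

lemma wpow_eq_wpow_of_length_eq {α : List A} {m n : ℕ}
    (h : (wpow α m).length = (wpow α n).length) : wpow α m = wpow α n := by
  rcases eq_or_ne α [] with rfl | hα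
  · simp only [wpow_nil]
  · rw [length_wpow, length_wpow] at h
    rw [Nat.eq_of_mul_eq_mul_right (List.length_pos_of_ne_nil hα) h]

lemma injOn_length_flat (s α p : List A) :
    Set.InjOn List.length {w : List A | ∃ n : ℕ, w = s ++ wpow α n ++ p} := by
  rintro _ ⟨m, rfl⟩ _ ⟨n, rfl⟩ h
  simp only [List.length_append] at h
  rw [wpow_eq_wpow_of_length_eq (by omega : (wpow α m).length = (wpow α n).length)]

/-- The Lyndon–Schützenberger theorem for two commuting words. -/
theorem exists_wpow_of_append_comm {u v : List A} (h : u ++ v = v ++ u) :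
    ∃ (w : List A) (i j : ℕ), u = wpow w i ∧ v = wpow w j := by
  induction hn : u.length + v.length using Nat.strong_induction_on generalizing u v with
  | _ n ih =>
  rcases eq_or_ne u [] with rfl | hu
  · exact ⟨v, 0, 1, rfl, by simp [wpow]⟩
  rcases eq_or_ne v [] with rfl | hv
  · exact ⟨u, 1, 0, by simp [wpow], rfl⟩
  have hu := List.length_pos_of_ne_nil hu
  have hv := List.length_pos_of_ne_nil hv
  rcases le_total u.length v.length with hle | hle
  · obtain ⟨t, rfl⟩ : u <+: v :=
      List.prefix_of_prefix_length_le (h ▸ List.prefix_append u v) (List.prefix_append _ u) hle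
    have ht : u ++ t = t ++ u := by simpa using h
    obtain ⟨w, i, j, rfl, rfl⟩ := ih _ (by simp only [List.length_append] at hn; omega) ht rfl
    exact ⟨w, i, i + j, rfl, (wpow_add w i j).symm⟩
  · obtain ⟨t, rfl⟩ : v <+: u :=
      List.prefix_of_prefix_length_le (h ▸ List.prefix_append v u) (List.prefix_append _ v) hle
    have ht : t ++ v = v ++ t := by simpa using h
    obtain ⟨w, i, j, rfl, rfl⟩ := ih _ (by simp only [List.length_append] at hn; omega) ht rfl
    exact ⟨w, j + i, j, (wpow_add w j i).symm, rfl⟩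

lemma append_comm_of_injOn_length {L : Language A} {p' s' u v : List A}
    (hsub : ({p'} : Language A) * ({u, v} : Language A)∗ * {s'} ≤ L)
    (hL : Set.InjOn List.length (L : Set (List A))) : u ++ v = v ++ u := by
  have hmem : ∀ x y, x ∈ ({u, v} : Language A) → y ∈ ({u, v} : Language A) →
      p' ++ (x ++ y) ++ s' ∈ L := fun x y hx hy => by
    refine hsub (Language.append_mem_mul (Language.append_mem_mul rfl ?_) rfl)
    simpa using Language.join_mem_kstar (l := ({u, v} : Language A)) (L := [x, y])
      (by simp [hx, hy])
  have hu : u ∈ ({u, v} : Language A) := Set.mem_insert u {v}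
  have hv : v ∈ ({u, v} : Language A) := Set.mem_insert_of_mem u rfl
  exact List.append_cancel_left <| List.append_cancel_right <|
    hL (hmem u v hu hv) (hmem v u hv hu) (by simp only [List.length_append]; omega)

end

/-- The flat language `s ⬝ α^* ⬝ p` contains no butterfly loop: if
`p' ⬝ {u,v}^* ⬝ s' ⊆ s ⬝ α^* ⬝ p`, then `u` and `v` are powers of a common
word. -/
theorem flat_no_butterfly {A : Type*} (α p s p' s' u v : List A)
    (hsub : ({p'} : Language A) * ({u, v} : Language A)∗ * {s'} ≤
      {w : List A | ∃ n : ℕ, w = s ++ wpow α n ++ p}) :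
    ∃ (w : List A) (i j : ℕ), u = wpow w i ∧ v = wpow w j :=
  exists_wpow_of_append_comm (append_comm_of_injOn_length hsub (injOn_length_flat s α p))
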